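/- Let n ≥ 1 and v ∈ ℝⁿ, let h : ℝⁿ → ℝⁿ be the componentwise absolute value (h(x))ᵢ = |xᵢ|, and let s be the softmax function s(x)ᵢ = exp(xᵢ)/∑_{j=1}^n exp(xⱼ). Then the inner product (s ∘ h)(t v) · h(v) = ∑_{i=1}^n (exp(t|vᵢ|)/∑_{j=1}^n exp(t|vⱼ|)) · |vᵢ| converges to ‖v‖_∞ = max_{1≤i≤n} |vᵢ| as t → ∞. -/

import Mathlib

/-!
Write `M = maxᵢ aᵢ`. The softmax weights of `t • a` sum to one, so the weighted average differs
from `M` by `∑ᵢ softmax(t • a)ᵢ (aᵢ - M)`. Terms with `aᵢ = M` vanish, and for `aᵢ < M` the weight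
is at most `exp (t (aᵢ - M))`, which tends to `0`.
-/

open Filter Topology

noncomputable def softmax {ι : Type*} [Fintype ι] (x : ι → ℝ) (i : ι) : ℝ :=
  Real.exp (x i) / ∑ j, Real.exp (x j)

section Softmax

variable {ι : Type*} [Fintype ι]

lemma softmax_nonneg (x : ι → ℝ) (i : ι) : 0 ≤ softmax x i :=
  div_nonneg (Real.exp_pos _).le (Finset.sum_nonneg fun j _ => (Real.exp_pos (x j)).le)

lemma sum_softmax [Nonempty ι] (x : ι → ℝ) : ∑ i, softmax x i = 1 := by
  have hpos : 0 < ∑ j, Real.exp (x j) :=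
    Finset.sum_pos (fun j _ => Real.exp_pos (x j)) Finset.univ_nonempty
  simp only [softmax]
  rw [← Finset.sum_div, div_self hpos.ne']

lemma softmax_le_exp_sub (x : ι → ℝ) (i k : ι) : softmax x i ≤ Real.exp (x i - x k) := by
  rw [softmax, Real.exp_sub]
  exact div_le_div_of_nonneg_left (Real.exp_pos _).le (Real.exp_pos _)
    (Finset.single_le_sum (fun j _ => (Real.exp_pos (x j)).le) (Finset.mem_univ k))

lemma tendsto_softmax_smul_atTop_of_lt {a : ι → ℝ} {i k : ι} (h : a i < a k) :
    Tendsto (fun t : ℝ => softmax (t • a) i) atTop (𝓝 0) := by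
  have hexp : Tendsto (fun t : ℝ => Real.exp (t * (a i - a k))) atTop (𝓝 0) :=
    Real.tendsto_exp_atBot.comp (tendsto_id.atTop_mul_const_of_neg (sub_neg.2 h))
  refine squeeze_zero (fun t => softmax_nonneg _ i) (fun t => ?_) hexp
  simpa [mul_sub] using softmax_le_exp_sub (t • a) i k

lemma sum_softmax_mul_sub [Nonempty ι] (x a : ι → ℝ) (c : ℝ) :
    ∑ i, softmax x i * a i - c = ∑ i, softmax x i * (a i - c) := by
  simp only [mul_sub, Finset.sum_sub_distrib, ← Finset.sum_mul, sum_softmax, one_mul]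

theorem tendsto_sum_softmax_smul_mul_atTop [Nonempty ι] (a : ι → ℝ) :
    Tendsto (fun t : ℝ => ∑ i, softmax (t • a) i * a i) atTop (𝓝 (⨆ i, a i)) := by
  obtain ⟨k, hk⟩ := exists_eq_ciSup_of_finite (f := a)
  have hmax : ∀ i, a i ≤ a k := fun i => hk ▸ le_ciSup (Set.finite_range a).bddAbove i
  rw [← hk, ← tendsto_sub_nhds_zero_iff]
  simp_rw [sum_softmax_mul_sub]
  have hterm : ∀ i, Tendsto (fun t : ℝ => softmax (t • a) i * (a i - a k)) atTop (𝓝 0) := by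
    intro i
    rcases (hmax i).eq_or_lt with heq | hlt
    · simp [heq]
    · simpa using (tendsto_softmax_smul_atTop_of_lt hlt).mul_const (a i - a k)
  simpa using tendsto_finsetSum Finset.univ fun i _ => hterm i

end Softmax

theorem softmax_abs_tendsto_sup_norm_general
    (n : ℕ) (v : Fin n → ℝ) :
    Tendsto
      (fun t : ℝ =>
        ∑ i : Fin n,
          (Real.exp (t * |v i|) / ∑ j : Fin n, Real.exp (t * |v j|)) * |v i|)
      atTop (nhds (⨆ i : Fin n, |v i|)) := by
  rcases isEmpty_or_nonempty (Fin n) with _ | _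
  · -- both sides are `0`: the empty supremum in `ℝ` is `0`
    simp
  · simpa [softmax] using tendsto_sum_softmax_smul_mul_atTop fun i => |v i|

/-- For `n ≥ 1` and `v ∈ ℝⁿ`, with `h` the componentwise
absolute value and `s` the softmax function, the inner product
`(s ∘ h)(t v) · h(v) = ∑ᵢ (exp(t|vᵢ|) / ∑ⱼ exp(t|vⱼ|)) * |vᵢ|` converges to
`‖v‖_∞ = maxᵢ |vᵢ|` as `t → ∞`. -/
theorem softmax_abs_tendsto_sup_norm
    (n : ℕ) (hn : 1 ≤ n) (v : Fin n → ℝ) :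
    Tendsto
      (fun t : ℝ =>
        ∑ i : Fin n,
          (Real.exp (t * |v i|) / ∑ j : Fin n, Real.exp (t * |v j|)) * |v i|)
      atTop (nhds (⨆ i : Fin n, |v i|)) :=
  softmax_abs_tendsto_sup_norm_general n v
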